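/- In the SRLOD model with learning rate α ∈ (0,1) and exploration rate ε ∈ (0,1) on a finite connected graph, consensus is not stable: if there exists a time t0 ∈ ℕ such that q^i_o(t0) > q^i_{-o}(t0) for some opinion o ∈ {-1,1} and every agent i ∈ {1,...,N}, then the probability that q^i_o(t) > q^i_{-o}(t) holds for all agents i and all t ≥ t0 is zero. -/

import Mathlib

open MeasureTheory ProbabilityTheory

noncomputable section

/-- The preferred opinion of an agent with Q-values `q : Bool → ℝ` (`true` encodes
opinion `1`, `false` encodes opinion `-1`): the opinion with the larger Q-value
(opinion `1` in case of a tie). -/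
def prefOf (q : Bool → ℝ) : Bool := if q false ≤ q true then true else false

/-- The real value of an opinion: `1` for `true`, `-1` for `false`. -/
def opinVal (b : Bool) : ℝ := if b then 1 else -1

/-- One round of the SRLOD model: the two endpoints `i`, `j` of the selected edge each
express an opinion (the preferred one if the respective exploration flag `e1`, `e2` is
`false`, the other one if it is `true`), and both update the Q-value of their own
expressed opinion by `q ← (1−α)q + α·o_i·o_j`.  (If the sampled pair `(i,j)` is not an
edge of `G` — an event of probability zero — nothing happens.) -/
def srlodStep {N : ℕ} (G : SimpleGraph (Fin N)) [DecidableRel G.Adj] (α : ℝ)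
    (q : Fin N → Bool → ℝ) (i j : Fin N) (e1 e2 : Bool) : Fin N → Bool → ℝ :=
  if G.Adj i j then
    let oi : Bool := if e1 then !(prefOf (q i)) else prefOf (q i)
    let oj : Bool := if e2 then !(prefOf (q j)) else prefOf (q j)
    let R : ℝ := opinVal oi * opinVal oj
    fun v o =>
      if v = i ∧ o = oi then (1 - α) * q i oi + α * R
      else if v = j ∧ o = oj then (1 - α) * q j oj + α * R
      else q v o
  else q

/-! Under consensus on `o`, one round on an edge `ij` in which `i` conforms and `j` explores
gives `i` the reward `-1` for `o`, so `q^i_o ≤ 1 - 2α` afterwards. In the next `K` rounds on the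
same edge both endpoints explore, `q^i_o` is frozen and `1 - q^i_{!o}` shrinks by the factor `1 - α`
each round, so it ends below `2(1 - α)^K < 2α`: agent `i` now prefers `!o`. This pattern of `K + 1`
rounds has a fixed positive probability, so by the second Borel–Cantelli lemma it almost surely
occurs in one of the disjoint blocks of `K + 1` rounds after `t0`. -/

open Filter

lemma add_mul_add_fin_injective (a L : ℕ) :
    Function.Injective fun p : ℕ × Fin L => a + p.1 * L + p.2 := by
  rintro ⟨n, k⟩ ⟨n', k'⟩ h
  have h' : (k : ℕ) + n * L = k' + n' * L := by simp only at h; omega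
  have hL : 0 < L := k.pos
  have hn : n = n' := by
    simpa [Nat.add_mul_div_right _ _ hL, Nat.div_eq_of_lt k.isLt, Nat.div_eq_of_lt k'.isLt]
      using congrArg (· / L) h'
  subst hn
  simp_all [Fin.ext_iff]

namespace ProbabilityTheory

variable {Ω β : Type*} [MeasurableSpace Ω] [MeasurableSpace β] {P : Measure Ω}
  {X : ℕ → Ω → β} {L : ℕ} {S : Fin L → Set β}

lemma iIndepFun.measure_iInter_block (hX : iIndepFun X P) (hS : ∀ k, MeasurableSet (S k))
    (a n : ℕ) :
    P (⋂ k : Fin L, X (a + n * L + k) ⁻¹' S k) = ∏ k : Fin L, P (X (a + n * L + k) ⁻¹' S k) :=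
  (hX.precomp ((add_mul_add_fin_injective a L).comp (Prod.mk_right_injective n))).meas_iInter
    fun k => ⟨S k, hS k, rfl⟩

lemma iIndepFun.iIndepSet_iInter_block (hXm : ∀ t, Measurable (X t)) (hX : iIndepFun X P)
    (hS : ∀ k, MeasurableSet (S k)) (a : ℕ) :
    iIndepSet (fun n => ⋂ k : Fin L, X (a + n * L + k) ⁻¹' S k) P := by
  refine (iIndepSet_iff_meas_biInter fun n => MeasurableSet.iInter fun k => hXm _ (hS k)).2
    fun T => ?_
  have hXp := hX.precomp (add_mul_add_fin_injective a L)
  calc P (⋂ n ∈ T, ⋂ k : Fin L, X (a + n * L + k) ⁻¹' S k)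
      = P (⋂ p ∈ T ×ˢ (Finset.univ : Finset (Fin L)), X (a + p.1 * L + p.2) ⁻¹' S p.2) := by
        congr 1; ext ω; simpa using ⟨fun h n k hn => h n hn k, fun h n hn k => h n k hn⟩
    _ = ∏ p ∈ T ×ˢ (Finset.univ : Finset (Fin L)), P (X (a + p.1 * L + p.2) ⁻¹' S p.2) :=
        hXp.meas_biInter fun p _ => ⟨S p.2, hS p.2, rfl⟩
    _ = ∏ n ∈ T, P (⋂ k : Fin L, X (a + n * L + k) ⁻¹' S k) := by
        rw [Finset.prod_product]
        exact Finset.prod_congr rfl fun n _ => (hX.measure_iInter_block hS a n).symm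

lemma measure_eq_zero_of_disjoint_iIndepSet {Ω : Type*} [MeasurableSpace Ω] {P : Measure Ω}
    [IsProbabilityMeasure P] {s : ℕ → Set Ω} (hsm : ∀ n, MeasurableSet (s n))
    (hs : iIndepSet s P) {δ : ENNReal} (hδ : δ ≠ 0) (hle : ∀ n, δ ≤ P (s n)) {E : Set Ω}
    (hE : ∀ n, Disjoint E (s n)) : P E = 0 := by
  have hsum : ∑' n, P (s n) = ⊤ :=
    top_le_iff.1 ((ENNReal.tsum_const_eq_top_of_ne_zero hδ).ge.trans (ENNReal.tsum_le_tsum hle))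
  have hunion : P (⋃ n, s n) = 1 :=
    le_antisymm prob_le_one
      ((measure_limsup_eq_one hsm hs hsum).ge.trans (measure_mono limsup_le_iSup))
  refine measure_mono_null ?_ ((prob_compl_eq_zero_iff (MeasurableSet.iUnion hsm)).2 hunion)
  exact Set.subset_compl_iff_disjoint_right.2 (Set.disjoint_iUnion_right.2 hE)

end ProbabilityTheory

lemma exists_measure_preimage_singleton_ne_zero {Ω β : Type*} [MeasurableSpace Ω] [Countable β]
    (P : Measure Ω) [NeZero P] (f : Ω → β) : ∃ b, P (f ⁻¹' {b}) ≠ 0 := by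
  by_contra! h
  have hcover : ⋃ b, f ⁻¹' {b} = Set.univ := Set.iUnion_eq_univ_iff.2 fun ω => ⟨f ω, rfl⟩
  exact NeZero.ne P (by simpa [hcover] using measure_iUnion_null h)

variable {N : ℕ} {G : SimpleGraph (Fin N)} [DecidableRel G.Adj] {α : ℝ}

def IsConsensus (q : Fin N → Bool → ℝ) (o : Bool) : Prop := ∀ v, q v (!o) < q v o

lemma prefOf_eq_of_lt {q : Bool → ℝ} {o : Bool} (h : q (!o) < q o) : prefOf q = o := by
  cases o <;> simp_all [prefOf, le_of_lt]

lemma opinVal_mul_opinVal_mem_Icc (a b : Bool) : opinVal a * opinVal b ∈ Set.Icc (-1 : ℝ) 1 := by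
  cases a <;> cases b <;> norm_num [opinVal]

lemma srlodStep_mem_Icc (hα : α ∈ Set.Icc (0 : ℝ) 1) {q : Fin N → Bool → ℝ}
    (hq : ∀ v b, q v b ∈ Set.Icc (-1 : ℝ) 1) (i j : Fin N) (e1 e2 : Bool) (v : Fin N) (b : Bool) :
    srlodStep G α q i j e1 e2 v b ∈ Set.Icc (-1 : ℝ) 1 := by
  have hmix : ∀ x R : ℝ, x ∈ Set.Icc (-1 : ℝ) 1 → R ∈ Set.Icc (-1 : ℝ) 1 →
      (1 - α) * x + α * R ∈ Set.Icc (-1 : ℝ) 1 := fun x R hx hR =>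
    convex_Icc (-1 : ℝ) 1 hx hR (by linarith [hα.2]) hα.1 (by ring)
  by_cases hij : G.Adj i j
  · simp only [srlodStep, if_pos hij]
    split_ifs <;>
      first | exact hq v b | exact hmix _ _ (hq _ _) (opinVal_mul_opinVal_mem_Icc _ _)
  · simpa [srlodStep, hij] using hq v b

lemma edge_law_pos {ε : ℝ} (hε : ε ∈ Set.Ioo (0 : ℝ) 1) {i j : Fin N} (hij : G.Adj i j)
    (e1 e2 : Bool) :
    0 < (if G.Adj i j then 1 / (2 * (G.edgeFinset.card : ℝ)) else 0) *
      (if e1 then ε else 1 - ε) * (if e2 then ε else 1 - ε) := by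
  have hE : (0 : ℝ) < G.edgeFinset.card :=
    Nat.cast_pos.2 (Finset.card_pos.2 ⟨s(i, j), G.mem_edgeFinset.2 hij⟩)
  have hexplore (e : Bool) : 0 < if e then ε else 1 - ε := by cases e <;> simp [hε.1, hε.2]
  rw [if_pos hij]
  exact mul_pos (mul_pos (by positivity) (hexplore e1)) (hexplore e2)

section Consensus

variable {q : Fin N → Bool → ℝ} {i j : Fin N} {o : Bool}

lemma srlodStep_false_true_left (hij : G.Adj i j) (hi : prefOf (q i) = o)
    (hj : prefOf (q j) = o) :
    srlodStep G α q i j false true i o = (1 - α) * q i o - α := by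
  cases o <;> simp [srlodStep, hij, hi, hj, opinVal] <;> ring

lemma srlodStep_true_true_left (hij : G.Adj i j) (hi : prefOf (q i) = o)
    (hj : prefOf (q j) = o) :
    srlodStep G α q i j true true i o = q i o := by
  simp [srlodStep, hij, hi, hj, G.ne_of_adj hij]

lemma srlodStep_true_true_left_not (hij : G.Adj i j) (hi : prefOf (q i) = o)
    (hj : prefOf (q j) = o) :
    srlodStep G α q i j true true i (!o) = (1 - α) * q i (!o) + α := by
  cases o <;> simp [srlodStep, hij, hi, hj, opinVal]

end Consensus

section Trajectory

variable {Q : ℕ → Fin N → Bool → ℝ} {x : ℕ → Fin N × Fin N × Bool × Bool}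

lemma trajectory_mem_Icc
    (hQ : ∀ t, Q (t + 1) = srlodStep G α (Q t) (x t).1 (x t).2.1 (x t).2.2.1 (x t).2.2.2)
    (hα : α ∈ Set.Icc (0 : ℝ) 1) (h0 : ∀ v b, Q 0 v b ∈ Set.Icc (-1 : ℝ) 1) :
    ∀ t v b, Q t v b ∈ Set.Icc (-1 : ℝ) 1
  | 0 => h0
  | t + 1 => by rw [hQ]; exact srlodStep_mem_Icc hα (trajectory_mem_Icc hQ hα h0 t) _ _ _ _

lemma trajectory_explore_run
    (hQ : ∀ t, Q (t + 1) = srlodStep G α (Q t) (x t).1 (x t).2.1 (x t).2.2.1 (x t).2.2.2)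
    {i j : Fin N} {o : Bool} (hij : G.Adj i j) (s K : ℕ)
    (hx : ∀ k < K, x (s + k) = (i, j, true, true)) (hcons : ∀ k < K, IsConsensus (Q (s + k)) o) :
    Q (s + K) i o = Q s i o ∧ 1 - Q (s + K) i (!o) = (1 - α) ^ K * (1 - Q s i (!o)) := by
  induction K with
  | zero => simp
  | succ K ih =>
    obtain ⟨ho, hno⟩ := ih (fun k hk => hx k (by omega)) (fun k hk => hcons k (by omega))
    have hi := prefOf_eq_of_lt (hcons K K.lt_succ_self i)
    have hj := prefOf_eq_of_lt (hcons K K.lt_succ_self j)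
    rw [← add_assoc, hQ, hx K K.lt_succ_self]
    refine ⟨(srlodStep_true_true_left hij hi hj).trans ho, ?_⟩
    rw [srlodStep_true_true_left_not hij hi hj, pow_succ]
    linear_combination (1 - α) * hno

lemma not_forall_isConsensus_of_dissent_explore_run
    (hQ : ∀ t, Q (t + 1) = srlodStep G α (Q t) (x t).1 (x t).2.1 (x t).2.2.1 (x t).2.2.2)
    (hα : α ≤ 1) {K : ℕ} (hK : (1 - α) ^ K < α)
    (hmem : ∀ t v b, Q t v b ∈ Set.Icc (-1 : ℝ) 1) {i j : Fin N} (hij : G.Adj i j) {s : ℕ}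
    (hx0 : x s = (i, j, false, true))
    (hx : ∀ k < K, x (s + 1 + k) = (i, j, true, true)) (o : Bool) :
    ¬ ∀ k ≤ K + 1, IsConsensus (Q (s + k)) o := by
  intro hcons
  have hdissent : Q (s + 1) i o = (1 - α) * Q s i o - α := by
    rw [hQ, hx0]
    exact srlodStep_false_true_left hij (prefOf_eq_of_lt (hcons 0 (by omega) i))
      (prefOf_eq_of_lt (hcons 0 (by omega) j))
  obtain ⟨ho, hno⟩ := trajectory_explore_run hQ hij (s + 1) K hx
    (fun k hk => by simpa [add_assoc] using hcons (1 + k) (by omega))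
  have hlast := hcons (1 + K) (by omega) i
  rw [← add_assoc, ho, hdissent] at hlast
  have hpow : 0 ≤ (1 - α) ^ K := pow_nonneg (by linarith) K
  nlinarith [mul_nonneg hpow (by linarith [(hmem (s + 1) i (!o)).1] : 0 ≤ 1 + Q (s + 1) i (!o)),
    mul_nonneg (by linarith : (0 : ℝ) ≤ 1 - α) (by linarith [(hmem s i o).2] : 0 ≤ 1 - Q s i o)]

end Trajectory

theorem stmt6_general {N : ℕ} (G : SimpleGraph (Fin N)) [DecidableRel G.Adj]
    (α ε : ℝ) (hα : α ∈ Set.Ioo (0 : ℝ) 1) (hε : ε ∈ Set.Ioo (0 : ℝ) 1)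
    {Ω : Type*} [MeasurableSpace Ω] (P : Measure Ω) [IsProbabilityMeasure P]
    (I J : ℕ → Ω → Fin N) (F1 F2 : ℕ → Ω → Bool)
    (hmeas : ∀ t : ℕ, Measurable (fun ω => (I t ω, J t ω, F1 t ω, F2 t ω)))
    (hindep : iIndepFun
      (fun t ω => (I t ω, J t ω, F1 t ω, F2 t ω)) P)
    (hlaw : ∀ (t : ℕ) (i j : Fin N) (e1 e2 : Bool),
      P {ω | (I t ω, J t ω, F1 t ω, F2 t ω) = (i, j, e1, e2)} =
        ENNReal.ofReal ((if G.Adj i j then 1 / (2 * (G.edgeFinset.card : ℝ)) else 0) *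
          (if e1 then ε else 1 - ε) * (if e2 then ε else 1 - ε)))
    (q : ℕ → Ω → Fin N → Bool → ℝ) (q0 : Fin N → Bool → ℝ)
    (hq0 : ∀ ω, q 0 ω = q0) (hq0mem : ∀ i o, q0 i o ∈ Set.Icc (-1 : ℝ) 1)
    (hdyn : ∀ (t : ℕ) (ω : Ω),
      q (t + 1) ω = srlodStep G α (q t ω) (I t ω) (J t ω) (F1 t ω) (F2 t ω)) :
    ∀ (t0 : ℕ) (o : Bool),
      P {ω | (∀ i, q t0 ω i (!o) < q t0 ω i o) ∧
          ∀ t ≥ t0, ∀ i, q t ω i (!o) < q t ω i o} = 0 := by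
  intro t0 o
  set X : ℕ → Ω → Fin N × Fin N × Bool × Bool := fun t ω => (I t ω, J t ω, F1 t ω, F2 t ω)
  obtain ⟨⟨i, j, e⟩, hne⟩ := exists_measure_preimage_singleton_ne_zero P (X 0)
  have hij : G.Adj i j := by
    by_contra h
    exact hne ((hlaw 0 i j _ _).trans (by simp [h]))
  have hstat : ∀ t e1 e2, P (X t ⁻¹' {(i, j, e1, e2)}) = P (X 0 ⁻¹' {(i, j, e1, e2)}) :=
    fun t e1 e2 => (hlaw t i j e1 e2).trans (hlaw 0 i j e1 e2).symm
  have hpos (e1 e2 : Bool) : P (X 0 ⁻¹' {(i, j, e1, e2)}) ≠ 0 :=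
    (hlaw 0 i j e1 e2).trans_ne (ENNReal.ofReal_pos.2 (edge_law_pos hε hij e1 e2)).ne'
  obtain ⟨K, hK⟩ := exists_pow_lt_of_lt_one hα.1 (by linarith [hα.1] : 1 - α < 1)
  -- round `k` of a block: `i` conforms at `k = 0` and explores afterwards, `j` always explores
  let w (k : ℕ) : Fin N × Fin N × Bool × Bool := (i, j, decide (k ≠ 0), true)
  have hS (k : Fin (K + 1)) : MeasurableSet {w k} := measurableSet_singleton _
  refine measure_eq_zero_of_disjoint_iIndepSet
    (fun n => MeasurableSet.iInter fun k => hmeas _ (hS k))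
    (hindep.iIndepSet_iInter_block hmeas hS t0)
    (δ := ∏ k : Fin (K + 1), P (X 0 ⁻¹' {w k})) (Finset.prod_ne_zero_iff.2 fun k _ => hpos _ _)
    (fun n => ((hindep.measure_iInter_block hS t0 n).trans
      (Finset.prod_congr rfl fun k _ => hstat _ _ _)).ge) (fun n => ?_)
  refine Set.disjoint_left.2 fun ω hcons hblock => ?_
  have hpattern := fun k => Set.mem_iInter.1 hblock k
  have hmem := trajectory_mem_Icc (Q := (q · ω)) (x := (X · ω)) (hdyn · ω)
    (Set.Ioo_subset_Icc_self hα) (hq0 ω ▸ hq0mem)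
  refine not_forall_isConsensus_of_dissent_explore_run (x := (X · ω)) (hdyn · ω) hα.2.le hK hmem
    hij (s := t0 + n * (K + 1)) ?_ (fun k hk => ?_) o fun k _ => hcons.2 _ (by omega)
  · simpa [w, X] using hpattern 0
  · simpa [w, X, Nat.add_right_comm _ 1 k, ← add_assoc] using hpattern ⟨k + 1, by omega⟩

/-- In the SRLOD model (at each round an edge of the finite connected graph
`G` is chosen uniformly at random — encoded by an ordered adjacent pair `(I t, J t)`,
each orientation having probability `1/(2|E|)` — and each endpoint explores
independently with probability `ε`; learning rate `α ∈ (0,1)`, exploration rate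
`ε ∈ (0,1)`, Q-values start in `[-1,1]`), consensus is not stable: for any time `t0` and
opinion `o`, the probability that `q^i_o(t0) > q^i_{-o}(t0)` for every agent `i` AND
that `q^i_o(t) > q^i_{-o}(t)` for all agents `i` and all `t ≥ t0` is zero. -/
theorem stmt6 {N : ℕ} (hN : 0 < N) (G : SimpleGraph (Fin N)) [DecidableRel G.Adj]
    (hG : G.Connected) (α ε : ℝ) (hα : α ∈ Set.Ioo (0 : ℝ) 1) (hε : ε ∈ Set.Ioo (0 : ℝ) 1)
    {Ω : Type*} [MeasurableSpace Ω] (P : Measure Ω) [IsProbabilityMeasure P]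
    (I J : ℕ → Ω → Fin N) (F1 F2 : ℕ → Ω → Bool)
    (hmeas : ∀ t : ℕ, Measurable (fun ω => (I t ω, J t ω, F1 t ω, F2 t ω)))
    (hindep : iIndepFun
      (fun t ω => (I t ω, J t ω, F1 t ω, F2 t ω)) P)
    (hlaw : ∀ (t : ℕ) (i j : Fin N) (e1 e2 : Bool),
      P {ω | (I t ω, J t ω, F1 t ω, F2 t ω) = (i, j, e1, e2)} =
        ENNReal.ofReal ((if G.Adj i j then 1 / (2 * (G.edgeFinset.card : ℝ)) else 0) *
          (if e1 then ε else 1 - ε) * (if e2 then ε else 1 - ε)))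
    (q : ℕ → Ω → Fin N → Bool → ℝ) (q0 : Fin N → Bool → ℝ)
    (hq0 : ∀ ω, q 0 ω = q0) (hq0mem : ∀ i o, q0 i o ∈ Set.Icc (-1 : ℝ) 1)
    (hdyn : ∀ (t : ℕ) (ω : Ω),
      q (t + 1) ω = srlodStep G α (q t ω) (I t ω) (J t ω) (F1 t ω) (F2 t ω)) :
    ∀ (t0 : ℕ) (o : Bool),
      P {ω | (∀ i, q t0 ω i (!o) < q t0 ω i o) ∧
          ∀ t ≥ t0, ∀ i, q t ω i (!o) < q t ω i o} = 0 :=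
  stmt6_general G α ε hα hε P I J F1 F2 hmeas hindep hlaw q q0 hq0 hq0mem hdyn

end
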